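/- arXiv:1312.2549 — 6 statements merged into one kernel-verified Lean document; each statement's English description precedes it below -/
import Mathlib

section
/- Let V be a finite set of Boolean variables and let C be a finite family of m clauses, where each clause is the disjunction of exactly two literals over two distinct variables of V (a literal is a variable or its negation). Then there exists a truth assignment g : V → {true, false} that satisfies at least (3/4)·m of the clauses, i.e., 4·(number of clauses of C satisfied by g) ≥ 3m. -/
open Finset

private lemma card_T {V : Type*} [Fintype V] [DecidableEq V] {x y : V} (hxy : x ≠ y)
    (c d c' d' : Bool) :
    (univ.filter (fun g : V → Bool => g x = c ∧ g y = d)).card =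
    (univ.filter (fun g : V → Bool => g x = c' ∧ g y = d')).card := by
  apply Finset.card_bij' (fun g _ => Function.update (Function.update g x c') y d')
    (fun g _ => Function.update (Function.update g x c) y d)
  · intro g hg
    simp only [mem_filter, mem_univ, true_and] at hg
    funext z
    by_cases hzy : z = y
    · subst hzy; simp [Function.update_self, hg.2]
    · by_cases hzx : z = x
      · subst hzx; simp [Function.update_of_ne hxy, Function.update_self,
          Function.update_of_ne hzy, hg.1]
      · simp [Function.update_of_ne hzy, Function.update_of_ne hzx]
  · intro g hg
    simp only [mem_filter, mem_univ, true_and] at hg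
    funext z
    by_cases hzy : z = y
    · subst hzy; simp [Function.update_self, hg.2]
    · by_cases hzx : z = x
      · subst hzx; simp [Function.update_of_ne hxy, Function.update_self,
          Function.update_of_ne hzy, hg.1]
      · simp [Function.update_of_ne hzy, Function.update_of_ne hzx]
  · intro g hg
    simp only [mem_filter, mem_univ, true_and]
    constructor
    · rw [Function.update_of_ne hxy, Function.update_self]
    · rw [Function.update_self]
  · intro g hg
    simp only [mem_filter, mem_univ, true_and]
    constructor
    · rw [Function.update_of_ne hxy, Function.update_self]
    · rw [Function.update_self]

private lemma four_mul_sat {V : Type*} [Fintype V] [DecidableEq V] {x y : V} (hxy : x ≠ y)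
    (a b : Bool) :
    4 * (univ.filter (fun g : V → Bool => g x = a ∨ g y = b)).card =
    3 * (univ : Finset (V → Bool)).card := by
  set k := (univ.filter (fun g : V → Bool => g x = !a ∧ g y = !b)).card with hk
  clear_value k
  have hsplit : ∀ c : Bool,
      (univ.filter (fun g : V → Bool => g x = c)).card =
        (univ.filter (fun g : V → Bool => g x = c ∧ g y = true)).card +
        (univ.filter (fun g : V → Bool => g x = c ∧ g y = false)).card := by
    intro c
    rw [show (univ.filter (fun g : V → Bool => g x = c ∧ g y = true)) =
        (univ.filter (fun g : V → Bool => g x = c)).filter (fun g => g y = true) by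
      rw [Finset.filter_filter],
      show (univ.filter (fun g : V → Bool => g x = c ∧ g y = false)) =
        (univ.filter (fun g : V → Bool => g x = c)).filter (fun g => ¬g y = true) by
      rw [Finset.filter_filter]; ext g; simp,
      Finset.card_filter_add_card_filter_not]
  have hxneg : (univ.filter (fun g : V → Bool => ¬g x = true)) =
      (univ.filter (fun g : V → Bool => g x = false)) := by
    ext g; simp
  have htot : (univ : Finset (V → Bool)).card = 4 * k := by
    rw [← Finset.card_filter_add_card_filter_not (s := (univ : Finset (V → Bool)))
      (p := fun g : V → Bool => g x = true), hxneg, hsplit, hsplit]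
    have h1 := card_T hxy true true (!a) (!b)
    have h2 := card_T hxy true false (!a) (!b)
    have h3 := card_T hxy false true (!a) (!b)
    have h4 := card_T hxy false false (!a) (!b)
    rw [h1, h2, h3, h4, ← hk]
    ring
  have hcompl : (univ.filter (fun g : V → Bool => g x = a ∨ g y = b)).card + k =
      (univ : Finset (V → Bool)).card := by
    rw [hk, ← Finset.card_filter_add_card_filter_not (s := (univ : Finset (V → Bool)))
      (p := fun g : V → Bool => g x = a ∨ g y = b)]
    have : (univ.filter (fun g : V → Bool => ¬(g x = a ∨ g y = b))) =
        (univ.filter (fun g : V → Bool => g x = !a ∧ g y = !b)) := by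
      ext g
      simp only [mem_filter, mem_univ, true_and, not_or]
      constructor
      · rintro ⟨h1, h2⟩; exact ⟨by cases a <;> simp_all, by cases b <;> simp_all⟩
      · rintro ⟨h1, h2⟩; exact ⟨by cases a <;> simp_all, by cases b <;> simp_all⟩
    rw [this]
  set S := (univ.filter (fun g : V → Bool => g x = a ∨ g y = b)).card with hS
  clear_value S
  set N := (univ : Finset (V → Bool)).card with hN
  clear_value N
  clear hk hS hN hsplit hxneg
  omega

/-- For any finite family of clauses, each the disjunction of exactly two literals over
two distinct variables, there is a truth assignment satisfying at least `3/4` of the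
clauses: `4·(number of satisfied clauses) ≥ 3·(number of clauses)`. A literal is encoded
as a pair (variable, polarity), and an assignment `g` satisfies a clause with literals
`(x, εx)` and `(y, εy)` iff `g x = εx` or `g y = εy`. -/
theorem stmt_3 {V ι : Type*} [Fintype V] [Fintype ι]
    (clause : ι → (V × Bool) × (V × Bool))
    (hdistinct : ∀ j : ι, (clause j).1.1 ≠ (clause j).2.1) :
    ∃ g : V → Bool,
      3 * Fintype.card ι ≤
        4 * {j : ι | g (clause j).1.1 = (clause j).1.2 ∨
              g (clause j).2.1 = (clause j).2.2}.ncard := by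
  classical
  set sat : (V → Bool) → Finset ι := fun g =>
    univ.filter (fun j => g (clause j).1.1 = (clause j).1.2 ∨
      g (clause j).2.1 = (clause j).2.2) with hsat
  have key : ∑ g : V → Bool, 4 * (sat g).card =
      ∑ g : V → Bool, 3 * Fintype.card ι := by
    rw [← Finset.mul_sum]
    have hswap : ∑ g : V → Bool, (sat g).card =
        ∑ j : ι, (univ.filter (fun g : V → Bool =>
          g (clause j).1.1 = (clause j).1.2 ∨
          g (clause j).2.1 = (clause j).2.2)).card := by
      simp only [hsat, Finset.card_filter]
      rw [Finset.sum_comm]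
    rw [hswap, Finset.mul_sum]
    have : ∀ j : ι, 4 * (univ.filter (fun g : V → Bool =>
        g (clause j).1.1 = (clause j).1.2 ∨
        g (clause j).2.1 = (clause j).2.2)).card =
        3 * (univ : Finset (V → Bool)).card := fun j =>
      four_mul_sat (hdistinct j) _ _
    rw [Finset.sum_congr rfl (fun j _ => this j), Finset.sum_const, smul_eq_mul,
      Finset.sum_const, smul_eq_mul, Fintype.card]
    ring
  have hne : (univ : Finset (V → Bool)).Nonempty := univ_nonempty
  obtain ⟨g, -, hg⟩ := Finset.exists_le_of_sum_le hne (le_of_eq key.symm)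
  refine ⟨g, ?_⟩
  have : {j : ι | g (clause j).1.1 = (clause j).1.2 ∨
      g (clause j).2.1 = (clause j).2.2}.ncard = (sat g).card := by
    rw [hsat]
    simp [Set.ncard_eq_toFinset_card']
  rw [this]
  exact hg
end

section
/- Let (V, C) be an E3-Occ-E2-SAT instance with n variables and m clauses, and let P be a point configuration for (V, C) in ℝ² (as defined in the context). Then for every integer w, there exists a truth assignment of the variables in V that satisfies at least w clauses of C if and only if there exists a set of 2n lines in ℝ² that cover at least 4n + w points of P. -/
/-- A line in `ℝ²`: a one-dimensional affine subspace, described parametrically. -/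
def IsLine (L : Set (ℝ × ℝ)) : Prop :=
  ∃ a d : ℝ × ℝ, d ≠ 0 ∧ L = {p : ℝ × ℝ | ∃ t : ℝ, p = a + t • d}

/-- Variable `i` occurs positively in clause `j`. -/
def OccursPos {n m : ℕ} (clause : Fin m → (Fin n × Bool) × (Fin n × Bool))
    (i : Fin n) (j : Fin m) : Prop :=
  (clause j).1 = (i, true) ∨ (clause j).2 = (i, true)

/-- Variable `i` occurs negatively in clause `j`. -/
def OccursNeg {n m : ℕ} (clause : Fin m → (Fin n × Bool) × (Fin n × Bool))
    (i : Fin n) (j : Fin m) : Prop :=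
  (clause j).1 = (i, false) ∨ (clause j).2 = (i, false)

/-- Assignment `g` satisfies clause `j` (a disjunction of two literals). -/
def Satisfies {n m : ℕ} (clause : Fin m → (Fin n × Bool) × (Fin n × Bool))
    (g : Fin n → Bool) (j : Fin m) : Prop :=
  g (clause j).1.1 = (clause j).1.2 ∨ g (clause j).2.1 = (clause j).2.2

/-- An E3-Occ-E2-SAT instance: each clause has two literals on distinct variables, each
variable occurs in exactly three clauses, and each variable has both a positive and a
negative occurrence. -/
def IsE3OccE2SAT {n m : ℕ} (clause : Fin m → (Fin n × Bool) × (Fin n × Bool)) : Prop :=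
  (∀ j : Fin m, (clause j).1.1 ≠ (clause j).2.1) ∧
  (∀ i : Fin n, {j : Fin m | (clause j).1.1 = i ∨ (clause j).2.1 = i}.ncard = 3) ∧
  (∀ i : Fin n, (∃ j, OccursPos clause i j) ∧ ∃ j, OccursNeg clause i j)

/-- The set `P` of `4n + m` points: four variable points per variable and one clause
point per clause. -/
def ConfigPoints {n m : ℕ} (vpt : Fin n → Fin 4 → ℝ × ℝ) (cpt : Fin m → ℝ × ℝ) :
    Set (ℝ × ℝ) :=
  (Set.range fun x : Fin n × Fin 4 => vpt x.1 x.2) ∪ Set.range cpt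

/-- The three designated collinear triples for variable `i`, given the three clauses
`tri i = (r, s, t)` in which it occurs and the flag `pos2 i` telling whether it has two
positive occurrences (in `r` and `s`) or two negative ones. -/
def DesignatedTriples {n m : ℕ} (vpt : Fin n → Fin 4 → ℝ × ℝ) (cpt : Fin m → ℝ × ℝ)
    (tri : Fin n → Fin m × Fin m × Fin m) (pos2 : Fin n → Bool) (i : Fin n) :
    Set (Set (ℝ × ℝ)) :=
  if pos2 i then
    {{cpt (tri i).1, vpt i 0, vpt i 1}, {cpt (tri i).2.1, vpt i 2, vpt i 3},
      {cpt (tri i).2.2, vpt i 0, vpt i 2}}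
  else
    {{cpt (tri i).1, vpt i 0, vpt i 2}, {cpt (tri i).2.1, vpt i 1, vpt i 3},
      {cpt (tri i).2.2, vpt i 0, vpt i 1}}

/-- `vpt`, `cpt` form a point configuration for the instance `clause`: all `4n + m`
points are distinct; for each variable the designated triples (matching its occurrence
pattern) are collinear; and no other three points of the configuration are collinear. -/
def IsPointConfig {n m : ℕ} (clause : Fin m → (Fin n × Bool) × (Fin n × Bool))
    (vpt : Fin n → Fin 4 → ℝ × ℝ) (cpt : Fin m → ℝ × ℝ)
    (tri : Fin n → Fin m × Fin m × Fin m) (pos2 : Fin n → Bool) : Prop :=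
  Function.Injective (Sum.elim (fun x : Fin n × Fin 4 => vpt x.1 x.2) cpt) ∧
  (∀ i : Fin n, (tri i).1 ≠ (tri i).2.1 ∧
    (if pos2 i then
        OccursPos clause i (tri i).1 ∧ OccursPos clause i (tri i).2.1 ∧
          OccursNeg clause i (tri i).2.2
      else
        OccursNeg clause i (tri i).1 ∧ OccursNeg clause i (tri i).2.1 ∧
          OccursPos clause i (tri i).2.2) ∧
    ∀ S ∈ DesignatedTriples vpt cpt tri pos2 i, Collinear ℝ S) ∧
  (∀ p q r : ℝ × ℝ, p ∈ ConfigPoints vpt cpt → q ∈ ConfigPoints vpt cpt →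
    r ∈ ConfigPoints vpt cpt → p ≠ q → p ≠ r → q ≠ r → Collinear ℝ {p, q, r} →
    ∃ i : Fin n, ({p, q, r} : Set (ℝ × ℝ)) ∈ DesignatedTriples vpt cpt tri pos2 i)

/-! Every line meets the configuration in at most three points, and those meeting it in three
points are exactly the designated triples: a designated triple contains exactly one clause point,
so a fourth point on its line would form a collinear triple with two clause points or with none.

Given an assignment, pair the variable points of each variable as `{v¹, v²}, {v³, v⁴}` if it is
true and as `{v¹, v³}, {v², v⁴}` if it is false. The two lines through these pairs cover the four
variable points and the clause point of every occurrence whose literal is true. Conversely, given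
`2n` lines, a line through at most two points of the configuration covers at most two. Give each
variable the sign of its first or second occurrence if the line of one of these triples is used,
and the sign of its third occurrence otherwise. Then the designated lines used for a variable
cover, besides satisfied clause points, at most two points each: the only clause point that may
stay unsatisfied is that of the third triple, which shares a variable point with each of the
other two. -/

theorem IsLine.collinear {L : Set (ℝ × ℝ)} (hL : IsLine L) : Collinear ℝ L := by
  obtain ⟨a, d, -, rfl⟩ := hL
  rw [collinear_iff_exists_forall_eq_smul_vadd]
  exact ⟨a, d, fun p ⟨t, ht⟩ => ⟨t, by rw [ht, vadd_eq_add, add_comm]⟩⟩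

theorem isLine_affineSpan_pair {p q : ℝ × ℝ} (h : p ≠ q) :
    IsLine (line[ℝ, p, q] : Set (ℝ × ℝ)) := by
  refine ⟨p, q - p, sub_ne_zero.2 h.symm, Set.ext fun x => ?_⟩
  simp only [SetLike.mem_coe, mem_affineSpan_pair_iff_exists_lineMap_eq,
    AffineMap.lineMap_apply_module', Set.mem_ofPred_eq, eq_comm (a := x), add_comm p]

/-- The variable points `{v¹, v²}, {v³, v⁴}` (indexed from `0`) lie on the lines of positive
occurrences, `{v¹, v³}, {v², v⁴}` on those of negative ones. -/
def litPair : Bool → Fin 2 → Fin 4 × Fin 4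
  | true, 0 => (0, 1)
  | true, 1 => (2, 3)
  | false, 0 => (0, 2)
  | false, 1 => (1, 3)

/-- The sign of the occurrence of a variable in `c_r, c_s, c_t` (for `k = 0, 1, 2`), where `b`
is the sign of its occurrences in `c_r` and `c_s`. -/
def occSign (b : Bool) (k : Fin 3) : Bool := if k = 2 then !b else b

def occSlot (k : Fin 3) : Fin 2 := if k = 1 then 1 else 0

def varPair (b : Bool) (k : Fin 3) : Fin 4 × Fin 4 := litPair (occSign b k) (occSlot k)

def readSign (b : Bool) (K : Finset (Fin 3)) : Bool := if 0 ∈ K ∨ 1 ∈ K then b else !b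

theorem litPair_fst_ne_snd (b : Bool) (e : Fin 2) : (litPair b e).1 ≠ (litPair b e).2 := by
  revert b e; decide

theorem exists_litPair_eq (b : Bool) (a : Fin 4) :
    ∃ e, (litPair b e).1 = a ∨ (litPair b e).2 = a := by
  revert b a; decide

theorem litPair_fst_ne_of_ne {b : Bool} {e e' : Fin 2} (h : e ≠ e') :
    (litPair b e').1 ≠ (litPair b e).1 ∧ (litPair b e').1 ≠ (litPair b e).2 := by
  revert b e e'; decide

theorem eq_zero_one_of_occSign_eq {b : Bool} {k k' : Fin 3} (h : occSign b k = occSign b k')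
    (hne : k ≠ k') : k = 0 ∧ k' = 1 ∨ k = 1 ∧ k' = 0 := by
  revert b k k'; decide

theorem card_varPairs_add_card_filter_le (b : Bool) (K : Finset (Fin 3)) :
    (K.biUnion fun k => {(varPair b k).1, (varPair b k).2}).card +
      (K.filter fun k => readSign b K ≠ occSign b k).card ≤ 2 * K.card := by
  revert b K; decide

section Occurrences

variable {n m : ℕ} {clause : Fin m → (Fin n × Bool) × (Fin n × Bool)}

def Occurs (clause : Fin m → (Fin n × Bool) × (Fin n × Bool)) (i : Fin n) (j : Fin m)
    (b : Bool) : Prop :=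
  (clause j).1 = (i, b) ∨ (clause j).2 = (i, b)

theorem Occurs.satisfies {g : Fin n → Bool} {i : Fin n} {j : Fin m} {b : Bool}
    (h : Occurs clause i j b) (hg : g i = b) : Satisfies clause g j := by
  rcases h with h | h
  · exact Or.inl (by rw [h, hg])
  · exact Or.inr (by rw [h, hg])

theorem Satisfies.exists_occurs {g : Fin n → Bool} {j : Fin m} (h : Satisfies clause g j) :
    ∃ i, Occurs clause i j (g i) := by
  rcases h with h | h
  · exact ⟨_, Or.inl (Prod.ext rfl h.symm)⟩
  · exact ⟨_, Or.inr (Prod.ext rfl h.symm)⟩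

theorem Occurs.sign_eq {i : Fin n} {j : Fin m} {b b' : Bool}
    (hds : (clause j).1.1 ≠ (clause j).2.1) (h : Occurs clause i j b)
    (h' : Occurs clause i j b') : b = b' := by
  rcases h with h | h <;> rcases h' with h' | h' <;> simp_all

end Occurrences

section Configuration

variable {n m : ℕ} {vpt : Fin n → Fin 4 → ℝ × ℝ} {cpt : Fin m → ℝ × ℝ}
  {tri : Fin n → Fin m × Fin m × Fin m} {pos2 : Fin n → Bool}

def occClause (tri : Fin n → Fin m × Fin m × Fin m) (i : Fin n) : Fin 3 → Fin m
  | 0 => (tri i).1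
  | 1 => (tri i).2.1
  | 2 => (tri i).2.2

def designatedTriple (vpt : Fin n → Fin 4 → ℝ × ℝ) (cpt : Fin m → ℝ × ℝ)
    (tri : Fin n → Fin m × Fin m × Fin m) (pos2 : Fin n → Bool) (i : Fin n) (k : Fin 3) :
    Set (ℝ × ℝ) :=
  {cpt (occClause tri i k), vpt i (varPair (pos2 i) k).1, vpt i (varPair (pos2 i) k).2}

theorem mem_designatedTriples_iff {i : Fin n} {S : Set (ℝ × ℝ)} :
    S ∈ DesignatedTriples vpt cpt tri pos2 i ↔
      ∃ k, S = designatedTriple vpt cpt tri pos2 i k := by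
  cases h : pos2 i <;>
    simp [DesignatedTriples, designatedTriple, h, Fin.exists_fin_succ, varPair, occSign,
      occSlot, litPair, occClause]

instance finite_designatedTriple (i : Fin n) (k : Fin 3) :
    Finite (designatedTriple vpt cpt tri pos2 i k) := by
  unfold designatedTriple; infer_instance

instance finite_configPoints : Finite (ConfigPoints vpt cpt) := by
  unfold ConfigPoints; infer_instance

theorem vpt_mem_configPoints (i : Fin n) (a : Fin 4) : vpt i a ∈ ConfigPoints vpt cpt :=
  Or.inl ⟨(i, a), rfl⟩

theorem cpt_mem_configPoints (j : Fin m) : cpt j ∈ ConfigPoints vpt cpt :=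
  Or.inr ⟨j, rfl⟩

def coverLine (vpt : Fin n → Fin 4 → ℝ × ℝ) (g : Fin n → Bool) (p : Fin n × Fin 2) :
    Set (ℝ × ℝ) :=
  line[ℝ, vpt p.1 (litPair (g p.1) p.2).1, vpt p.1 (litPair (g p.1) p.2).2]

end Configuration

namespace IsPointConfig

variable {n m : ℕ} {clause : Fin m → (Fin n × Bool) × (Fin n × Bool)}
  {vpt : Fin n → Fin 4 → ℝ × ℝ} {cpt : Fin m → ℝ × ℝ}
  {tri : Fin n → Fin m × Fin m × Fin m} {pos2 : Fin n → Bool}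
  (hconf : IsPointConfig clause vpt cpt tri pos2)
include hconf

theorem vpt_injective : Function.Injective fun p : Fin n × Fin 4 => vpt p.1 p.2 :=
  hconf.1.comp Sum.inl_injective

theorem cpt_injective : Function.Injective cpt :=
  hconf.1.comp Sum.inr_injective

theorem vpt_ne_cpt (i : Fin n) (a : Fin 4) (j : Fin m) : vpt i a ≠ cpt j :=
  fun h => Sum.inl_ne_inr (hconf.1 (a₁ := .inl (i, a)) (a₂ := .inr j) h)

theorem vpt_litPair_fst_ne_snd (i : Fin n) (b : Bool) (e : Fin 2) :
    vpt i (litPair b e).1 ≠ vpt i (litPair b e).2 :=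
  fun h => litPair_fst_ne_snd b e (Prod.ext_iff.1 (hconf.vpt_injective
    (a₁ := (i, (litPair b e).1)) (a₂ := (i, (litPair b e).2)) h)).2

theorem cpt_mem_designatedTriple_iff {i : Fin n} {k : Fin 3} {j : Fin m} :
    cpt j ∈ designatedTriple vpt cpt tri pos2 i k ↔ j = occClause tri i k := by
  refine ⟨fun h => ?_, fun h => h ▸ Or.inl rfl⟩
  rcases h with h | h | h
  · exact hconf.cpt_injective h
  · exact absurd h.symm (hconf.vpt_ne_cpt _ _ _)
  · exact absurd h.symm (hconf.vpt_ne_cpt _ _ _)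

theorem existsUnique_cpt_mem_of_collinear {p q r : ℝ × ℝ} (hp : p ∈ ConfigPoints vpt cpt)
    (hq : q ∈ ConfigPoints vpt cpt) (hr : r ∈ ConfigPoints vpt cpt) (hpq : p ≠ q)
    (hpr : p ≠ r) (hqr : q ≠ r) (hc : Collinear ℝ {p, q, r}) :
    ∃! j, cpt j ∈ ({p, q, r} : Set (ℝ × ℝ)) := by
  obtain ⟨i, hi⟩ := hconf.2.2 p q r hp hq hr hpq hpr hqr hc
  obtain ⟨k, hk⟩ := mem_designatedTriples_iff.1 hi
  simp only [hk, hconf.cpt_mem_designatedTriple_iff]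
  exact existsUnique_eq

theorem not_collinear_vpt {a b c : Fin n × Fin 4} (hab : a ≠ b) (hac : a ≠ c) (hbc : b ≠ c) :
    ¬ Collinear ℝ {vpt a.1 a.2, vpt b.1 b.2, vpt c.1 c.2} := by
  intro hcol
  obtain ⟨j, hj, -⟩ := hconf.existsUnique_cpt_mem_of_collinear (vpt_mem_configPoints _ _)
    (vpt_mem_configPoints _ _) (vpt_mem_configPoints _ _) (hconf.vpt_injective.ne hab)
    (hconf.vpt_injective.ne hac) (hconf.vpt_injective.ne hbc) hcol
  rcases hj with h | h | h <;> exact hconf.vpt_ne_cpt _ _ _ h.symm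

theorem mem_designatedTriple_of_subset_line {L : Set (ℝ × ℝ)} (hL : IsLine L) {i : Fin n}
    {k : Fin 3} (hT : designatedTriple vpt cpt tri pos2 i k ⊆ L) {w : ℝ × ℝ} (hwL : w ∈ L)
    (hwP : w ∈ ConfigPoints vpt cpt) : w ∈ designatedTriple vpt cpt tri pos2 i k := by
  set c := cpt (occClause tri i k)
  set u := vpt i (varPair (pos2 i) k).1
  set v := vpt i (varPair (pos2 i) k).2
  have hcu : c ≠ u := (hconf.vpt_ne_cpt _ _ _).symm
  by_contra hwT
  simp only [designatedTriple, Set.mem_insert_iff, Set.mem_singleton_iff, not_or] at hwT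
  obtain ⟨hwc, hwu, hwv⟩ := hwT
  -- the clause point of the collinear triple `w, u, v` can only be `w`
  obtain ⟨j, hj, -⟩ := hconf.existsUnique_cpt_mem_of_collinear hwP (vpt_mem_configPoints _ _)
    (vpt_mem_configPoints _ _) hwu hwv (hconf.vpt_litPair_fst_ne_snd _ _ _)
    (hL.collinear.subset (Set.insert_subset hwL ((Set.subset_insert _ _).trans hT)))
  have hjw : cpt j = w := by
    rcases hj with h | h | h
    · exact h
    · exact absurd h.symm (hconf.vpt_ne_cpt _ _ _)
    · exact absurd h.symm (hconf.vpt_ne_cpt _ _ _)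
  -- so the collinear triple `w, c, u` has two clause points
  obtain ⟨j', -, hj'⟩ := hconf.existsUnique_cpt_mem_of_collinear hwP (cpt_mem_configPoints _)
    (vpt_mem_configPoints _ _) hwc hwu hcu (hL.collinear.subset (Set.insert_subset hwL
      (Set.insert_subset (hT (Or.inl rfl))
        (Set.singleton_subset_iff.2 (hT (Or.inr (Or.inl rfl)))))))
  have := (hj' j (Or.inl hjw)).trans (hj' (occClause tri i k) (Or.inr (Or.inl rfl))).symm
  exact hwc (by rw [← hjw, this])

theorem exists_inter_eq_designatedTriple {L : Set (ℝ × ℝ)} (hL : IsLine L)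
    (h3 : 3 ≤ (L ∩ ConfigPoints vpt cpt).ncard) :
    ∃ p : Fin n × Fin 3, L ∩ ConfigPoints vpt cpt = designatedTriple vpt cpt tri pos2 p.1 p.2 := by
  obtain ⟨t, ht, htc⟩ := Set.exists_subset_card_eq h3
  obtain ⟨x, y, z, hxy, hxz, hyz, rfl⟩ := Set.ncard_eq_three.1 htc
  obtain ⟨i, hi⟩ := hconf.2.2 x y z (ht (by simp)).2 (ht (by simp)).2 (ht (by simp)).2 hxy hxz
    hyz (hL.collinear.subset (ht.trans Set.inter_subset_left))
  obtain ⟨k, hk⟩ := mem_designatedTriples_iff.1 hi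
  rw [hk] at ht
  exact ⟨(i, k), Set.Subset.antisymm (fun w hw => hconf.mem_designatedTriple_of_subset_line hL
    (ht.trans Set.inter_subset_left) hw.1 hw.2) ht⟩

theorem occurs_occClause (i : Fin n) (k : Fin 3) :
    Occurs clause i (occClause tri i k) (occSign (pos2 i) k) := by
  have h := (hconf.2.1 i).2.1
  cases hb : pos2 i <;> simp only [hb, Bool.false_eq_true, if_true, if_false] at h <;>
    fin_cases k
  exacts [h.1, h.2.1, h.2.2, h.1, h.2.1, h.2.2]

theorem occClause_injective (hds : ∀ j : Fin m, (clause j).1.1 ≠ (clause j).2.1) (i : Fin n) :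
    Function.Injective (occClause tri i) := by
  intro k k' h
  by_contra hne
  have hsign := (hconf.occurs_occClause i k).sign_eq (hds _) (h ▸ hconf.occurs_occClause i k')
  rcases eq_zero_one_of_occSign_eq hsign hne with ⟨rfl, rfl⟩ | ⟨rfl, rfl⟩
  · exact (hconf.2.1 i).1 h
  · exact (hconf.2.1 i).1 h.symm

theorem exists_eq_occClause (hsat : IsE3OccE2SAT clause) {i : Fin n} {j : Fin m} {b : Bool}
    (h : Occurs clause i j b) : ∃ k, j = occClause tri i k ∧ b = occSign (pos2 i) k := by
  have hrange : Set.range (occClause tri i) = {j | (clause j).1.1 = i ∨ (clause j).2.1 = i} := by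
    refine Set.eq_of_subset_of_ncard_le ?_ ?_ (Set.toFinite _)
    · rintro _ ⟨k, rfl⟩
      rcases hconf.occurs_occClause i k with h | h <;> simp [h]
    · rw [hsat.2.1 i, Set.ncard_range_of_injective (hconf.occClause_injective hsat.1 i),
        Nat.card_eq_fintype_card, Fintype.card_fin]
  have hj : j ∈ {j | (clause j).1.1 = i ∨ (clause j).2.1 = i} := by
    rcases h with h | h <;> simp [h]
  obtain ⟨k, rfl⟩ := hrange ▸ hj
  exact ⟨k, rfl, h.sign_eq (hsat.1 _) (hconf.occurs_occClause i k)⟩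

theorem cpt_mem_affineSpan_varPair (i : Fin n) (k : Fin 3) :
    cpt (occClause tri i k) ∈
      line[ℝ, vpt i (varPair (pos2 i) k).1, vpt i (varPair (pos2 i) k).2] :=
  ((hconf.2.1 i).2.2 _ (mem_designatedTriples_iff.2 ⟨k, rfl⟩)).mem_affineSpan_of_mem_of_ne
    (Or.inr (Or.inl rfl)) (Or.inr (Or.inr rfl)) (Or.inl rfl)
    (hconf.vpt_litPair_fst_ne_snd _ _ _)

theorem isLine_coverLine (g : Fin n → Bool) (p : Fin n × Fin 2) : IsLine (coverLine vpt g p) :=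
  isLine_affineSpan_pair (hconf.vpt_litPair_fst_ne_snd _ _ _)

theorem coverLine_injective (g : Fin n → Bool) : Function.Injective (coverLine vpt g) := by
  rintro ⟨i, e⟩ ⟨i', e'⟩ h
  by_contra hne
  have hfresh : (i', (litPair (g i') e').1) ≠ (i, (litPair (g i) e).1) ∧
      (i', (litPair (g i') e').1) ≠ (i, (litPair (g i) e).2) := by
    by_cases hi : i = i'
    · subst hi
      have he := litPair_fst_ne_of_ne (b := g i) fun he : e = e' => hne (by rw [he])
      exact ⟨fun h => he.1 (Prod.ext_iff.1 h).2, fun h => he.2 (Prod.ext_iff.1 h).2⟩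
    · exact ⟨fun h => hi (Prod.ext_iff.1 h).1.symm, fun h => hi (Prod.ext_iff.1 h).1.symm⟩
  have hmem : vpt i' (litPair (g i') e').1 ∈ coverLine vpt g (i, e) :=
    h ▸ left_mem_affineSpan_pair _ _ _
  exact hconf.not_collinear_vpt hfresh.1 hfresh.2
    (fun h => litPair_fst_ne_snd _ _ (Prod.ext_iff.1 h).2)
    (collinear_insert_of_mem_affineSpan_pair hmem)

theorem exists_lines_of_assignment (hsat : IsE3OccE2SAT clause) (g : Fin n → Bool) :
    ∃ Ls : Finset (Set (ℝ × ℝ)), Ls.card = 2 * n ∧ (∀ L ∈ Ls, IsLine L) ∧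
      4 * n + {j : Fin m | Satisfies clause g j}.ncard ≤
        ({p ∈ ConfigPoints vpt cpt | ∃ L ∈ Ls, p ∈ L} : Set (ℝ × ℝ)).ncard := by
  classical
  set Ls := Finset.univ.image (coverLine vpt g)
  have hvpt : Set.range (fun p : Fin n × Fin 4 => vpt p.1 p.2) ⊆
      {p ∈ ConfigPoints vpt cpt | ∃ L ∈ Ls, p ∈ L} := by
    rintro _ ⟨⟨i, a⟩, rfl⟩
    obtain ⟨e, he⟩ := exists_litPair_eq (g i) a
    refine ⟨vpt_mem_configPoints i a, _, Finset.mem_image_of_mem _ (Finset.mem_univ (i, e)), ?_⟩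
    rcases he with he | he
    · exact he ▸ left_mem_affineSpan_pair _ _ _
    · exact he ▸ right_mem_affineSpan_pair _ _ _
  have hcpt : cpt '' {j | Satisfies clause g j} ⊆
      {p ∈ ConfigPoints vpt cpt | ∃ L ∈ Ls, p ∈ L} := by
    rintro _ ⟨j, hj, rfl⟩
    obtain ⟨i, hi⟩ := hj.exists_occurs
    obtain ⟨k, rfl, hk⟩ := hconf.exists_eq_occClause hsat hi
    refine ⟨cpt_mem_configPoints _, _,
      Finset.mem_image_of_mem _ (Finset.mem_univ (i, occSlot k)), ?_⟩
    have := hconf.cpt_mem_affineSpan_varPair i k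
    rwa [varPair, ← hk] at this
  have hdisj : Disjoint (Set.range fun p : Fin n × Fin 4 => vpt p.1 p.2)
      (cpt '' {j | Satisfies clause g j}) := by
    rw [Set.disjoint_left]
    rintro _ ⟨⟨i, a⟩, rfl⟩ ⟨j, -, hj⟩
    exact hconf.vpt_ne_cpt i a j hj.symm
  refine ⟨Ls, ?_, ?_, ?_⟩
  · rw [Finset.card_image_of_injective _ (hconf.coverLine_injective g), Finset.card_univ,
      Fintype.card_prod, Fintype.card_fin, Fintype.card_fin, mul_comm]
  · simp only [Ls, Finset.mem_image]
    rintro _ ⟨p, -, rfl⟩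
    exact hconf.isLine_coverLine g p
  · calc 4 * n + {j | Satisfies clause g j}.ncard
        = (Set.range (fun p : Fin n × Fin 4 => vpt p.1 p.2) ∪
            cpt '' {j | Satisfies clause g j}).ncard := by
          rw [Set.ncard_union_eq hdisj, Set.ncard_range_of_injective hconf.vpt_injective,
            Set.ncard_image_of_injective _ hconf.cpt_injective, Nat.card_eq_fintype_card,
            Fintype.card_prod, Fintype.card_fin, Fintype.card_fin, mul_comm]
      _ ≤ _ := Set.ncard_le_ncard (Set.union_subset hvpt hcpt) (Set.toFinite _)

theorem exists_designatedTriples_of_lines (Ls : Finset (Set (ℝ × ℝ)))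
    (hLs : ∀ L ∈ Ls, IsLine L) :
    ∃ sel : Finset (Fin n × Fin 3),
      sel.card ≤ (Ls.filter fun L => 3 ≤ (L ∩ ConfigPoints vpt cpt).ncard).card ∧
      ∀ L ∈ Ls, 3 ≤ (L ∩ ConfigPoints vpt cpt).ncard →
        ∃ p ∈ sel, L ∩ ConfigPoints vpt cpt = designatedTriple vpt cpt tri pos2 p.1 p.2 := by
  classical
  set Rich := Ls.filter fun L => 3 ≤ (L ∩ ConfigPoints vpt cpt).ncard
  have hrich : ∀ L : Rich, ∃ p : Fin n × Fin 3,
      (L : Set (ℝ × ℝ)) ∩ ConfigPoints vpt cpt = designatedTriple vpt cpt tri pos2 p.1 p.2 :=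
    fun L => hconf.exists_inter_eq_designatedTriple (hLs _ (Finset.mem_filter.1 L.2).1)
      (Finset.mem_filter.1 L.2).2
  choose cls hcls using hrich
  refine ⟨Finset.univ.image cls,
    Finset.card_image_le.trans_eq (Finset.card_univ.trans (Fintype.card_coe _)),
    fun L hL h3 => ?_⟩
  have hL' : L ∈ Rich := Finset.mem_filter.2 ⟨hL, h3⟩
  exact ⟨_, Finset.mem_image_of_mem _ (Finset.mem_univ ⟨L, hL'⟩), hcls ⟨L, hL'⟩⟩

theorem ncard_designatedTriples_diff_le (g : Fin n → Bool) (i : Fin n) (K : Finset (Fin 3))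
    (hg : g i = readSign (pos2 i) K) :
    ((⋃ k ∈ K, designatedTriple vpt cpt tri pos2 i k) \
      cpt '' {j | Satisfies clause g j}).ncard ≤ 2 * K.card := by
  classical
  set V := K.biUnion fun k => {(varPair (pos2 i) k).1, (varPair (pos2 i) k).2}
  set B := K.filter fun k => readSign (pos2 i) K ≠ occSign (pos2 i) k
  have hsub : (⋃ k ∈ K, designatedTriple vpt cpt tri pos2 i k) \
      cpt '' {j | Satisfies clause g j} ⊆
        vpt i '' V ∪ (fun k => cpt (occClause tri i k)) '' B := by
    rintro x ⟨hx, hxs⟩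
    obtain ⟨k, hk, hx⟩ := Set.mem_iUnion₂.1 hx
    rcases hx with rfl | rfl | rfl
    · refine Or.inr ⟨k, Finset.mem_filter.2 ⟨hk, fun h => hxs ?_⟩, rfl⟩
      exact ⟨_, (hconf.occurs_occClause i k).satisfies (hg.trans h), rfl⟩
    · exact Or.inl ⟨_, Finset.mem_biUnion.2 ⟨k, hk, by simp⟩, rfl⟩
    · exact Or.inl ⟨_, Finset.mem_biUnion.2 ⟨k, hk, by simp⟩, rfl⟩
  calc _ ≤ (vpt i '' V ∪ (fun k => cpt (occClause tri i k)) '' B).ncard :=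
        Set.ncard_le_ncard hsub (Set.toFinite _)
    _ ≤ V.card + B.card := by
        refine (Set.ncard_union_le _ _).trans (add_le_add ?_ ?_) <;>
          exact (Set.ncard_image_le (Finset.finite_toSet _)).trans (Set.ncard_coe_finset _).le
    _ ≤ 2 * K.card := card_varPairs_add_card_filter_le _ _

theorem exists_assignment_of_lines (Ls : Finset (Set (ℝ × ℝ))) (hcard : Ls.card = 2 * n)
    (hLs : ∀ L ∈ Ls, IsLine L) :
    ∃ g : Fin n → Bool,
      ({p ∈ ConfigPoints vpt cpt | ∃ L ∈ Ls, p ∈ L} : Set (ℝ × ℝ)).ncard ≤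
        4 * n + {j : Fin m | Satisfies clause g j}.ncard := by
  classical
  obtain ⟨sel, hsel, hcls⟩ :=
    hconf.exists_designatedTriples_of_lines (tri := tri) (pos2 := pos2) Ls hLs
  set P := ConfigPoints vpt cpt
  set K : Fin n → Finset (Fin 3) := fun i => (sel.filter (·.1 = i)).image Prod.snd
  set g : Fin n → Bool := fun i => readSign (pos2 i) (K i)
  set Sat := {j : Fin m | Satisfies clause g j}
  set Poor := Ls.filter fun L => ¬ 3 ≤ (L ∩ P).ncard
  refine ⟨g, ?_⟩
  have hcover : {p ∈ P | ∃ L ∈ Ls, p ∈ L} ⊆ cpt '' Sat ∪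
      (⋃ i, (⋃ k ∈ K i, designatedTriple vpt cpt tri pos2 i k) \ cpt '' Sat) ∪
      ⋃ L ∈ Poor, L ∩ P := by
    rintro x ⟨hxP, L, hL, hxL⟩
    by_cases h3 : 3 ≤ (L ∩ P).ncard
    · obtain ⟨⟨i, k⟩, hik, hLP⟩ := hcls L hL h3
      have hx : x ∈ designatedTriple vpt cpt tri pos2 i k := hLP ▸ ⟨hxL, hxP⟩
      by_cases hs : x ∈ cpt '' Sat
      · exact Or.inl (Or.inl hs)
      · refine Or.inl (Or.inr (Set.mem_iUnion.2 ⟨i, Set.mem_biUnion ?_ hx, hs⟩))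
        exact Finset.mem_image.2 ⟨(i, k), Finset.mem_filter.2 ⟨hik, rfl⟩, rfl⟩
    · exact Or.inr (Set.mem_biUnion (Finset.mem_filter.2 ⟨hL, h3⟩) ⟨hxL, hxP⟩)
  have hK : ∑ i, (K i).card ≤ sel.card := calc
    ∑ i, (K i).card ≤ ∑ i, (sel.filter (·.1 = i)).card :=
      Finset.sum_le_sum fun i _ => Finset.card_image_le
    _ = sel.card := by
      rw [Finset.sum_card_fiberwise_eq_card_filter,
        Finset.filter_true_of_mem fun _ _ => Finset.mem_univ _]
  have hpoor : ∑ L ∈ Poor, (L ∩ P).ncard ≤ Poor.card * 2 := by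
    refine (Finset.sum_le_card_nsmul _ _ 2 fun L hL => ?_).trans_eq (smul_eq_mul _ _)
    have := (Finset.mem_filter.1 hL).2
    omega
  have hsplit : (Ls.filter fun L => 3 ≤ (L ∩ P).ncard).card + Poor.card = 2 * n :=
    hcard ▸ Finset.card_filter_add_card_filter_not _
  calc _ ≤ (cpt '' Sat ∪
      (⋃ i, (⋃ k ∈ K i, designatedTriple vpt cpt tri pos2 i k) \ cpt '' Sat) ∪
      ⋃ L ∈ Poor, L ∩ P).ncard := Set.ncard_le_ncard hcover (Set.toFinite _)
    _ ≤ Sat.ncard + ∑ i, ((⋃ k ∈ K i, designatedTriple vpt cpt tri pos2 i k) \ cpt '' Sat).ncard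
        + ∑ L ∈ Poor, (L ∩ P).ncard :=
      (Set.ncard_union_le _ _).trans (add_le_add ((Set.ncard_union_le _ _).trans
        (add_le_add (Set.ncard_image_le (Set.toFinite _)) (Set.ncard_iUnion_le_of_fintype _)))
        (Finset.set_ncard_biUnion_le _ _))
    _ ≤ Sat.ncard + ∑ i, 2 * (K i).card + Poor.card * 2 := by
      gcongr with i
      exact hconf.ncard_designatedTriples_diff_le g i (K i) rfl
    _ ≤ 4 * n + Sat.ncard := by
      rw [← Finset.mul_sum]
      omega

end IsPointConfig

/-- There is an assignment satisfying at least `w` clauses iff there is a set of `2n`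
lines covering at least `4n + w` points of the configuration. -/
theorem stmt_6 {n m : ℕ} (clause : Fin m → (Fin n × Bool) × (Fin n × Bool))
    (hsat : IsE3OccE2SAT clause)
    (vpt : Fin n → Fin 4 → ℝ × ℝ) (cpt : Fin m → ℝ × ℝ)
    (tri : Fin n → Fin m × Fin m × Fin m) (pos2 : Fin n → Bool)
    (hconf : IsPointConfig clause vpt cpt tri pos2) (w : ℤ) :
    (∃ g : Fin n → Bool, w ≤ ({j : Fin m | Satisfies clause g j}.ncard : ℤ)) ↔
    ∃ Ls : Finset (Set (ℝ × ℝ)), Ls.card = 2 * n ∧ (∀ L ∈ Ls, IsLine L) ∧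
      4 * (n : ℤ) + w ≤
        (({p ∈ ConfigPoints vpt cpt | ∃ L ∈ Ls, p ∈ L} : Set (ℝ × ℝ)).ncard : ℤ) := by
  constructor
  · rintro ⟨g, hg⟩
    obtain ⟨Ls, hcard, hLs, hcov⟩ := hconf.exists_lines_of_assignment hsat g
    exact ⟨Ls, hcard, hLs, by omega⟩
  · rintro ⟨Ls, hcard, hLs, hcov⟩
    obtain ⟨g, hg⟩ := hconf.exists_assignment_of_lines Ls hcard hLs
    exact ⟨g, by omega⟩
end

section
/- Let (V, C) be an E3-Occ-E2-SAT instance with n variables and m clauses, and let P be a point configuration for (V, C) in ℝ² (as defined in the context). If there exists a truth assignment of the variables in V that satisfies at least w clauses of C, then there exists a family of at most 2n + ⌈(m − w)/2⌉ lines in ℝ² that cover all points of P. -/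
noncomputable def lineThrough (p q : ℝ × ℝ) : Set (ℝ × ℝ) :=
  {x | ∃ t : ℝ, x = p + t • (if q = p then ((1:ℝ), (0:ℝ)) else q - p)}

lemma isLine_lineThrough (p q : ℝ × ℝ) : IsLine (lineThrough p q) := by
  refine ⟨p, _, ?_, rfl⟩
  split
  · simp [Prod.ext_iff]
  · exact sub_ne_zero.mpr (by assumption)

lemma left_mem_lineThrough (p q : ℝ × ℝ) : p ∈ lineThrough p q := ⟨0, by simp⟩

lemma right_mem_lineThrough (p q : ℝ × ℝ) : q ∈ lineThrough p q := by
  by_cases h : q = p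
  · exact ⟨0, by simp [h]⟩
  · exact ⟨1, by simp [h]⟩

lemma mem_lineThrough_of_collinear {c p q : ℝ × ℝ} (hpq : q ≠ p)
    (h : Collinear ℝ ({c, p, q} : Set (ℝ × ℝ))) : c ∈ lineThrough p q := by
  rw [collinear_iff_of_mem (Set.mem_insert_of_mem _ (Set.mem_insert _ _))] at h
  obtain ⟨v, hv⟩ := h
  obtain ⟨rc, hrc⟩ := hv c (Set.mem_insert _ _)
  obtain ⟨rq, hrq⟩ := hv q (by simp)
  simp only [vadd_eq_add] at hrc hrq
  have hq : q - p = rq • v := by rw [hrq]; abel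
  have hrq0 : rq ≠ 0 := by
    rintro rfl
    rw [zero_smul] at hq
    exact hpq (sub_eq_zero.mp hq)
  refine ⟨rc / rq, ?_⟩
  rw [if_neg hpq, hq, smul_smul, div_mul_cancel₀ _ hrq0, hrc]
  abel

open Classical in
lemma cover_pairs {α : Type*} [DecidableEq α] (f : α → ℝ × ℝ) (U : Finset α) :
    ∃ Ls : Finset (Set (ℝ × ℝ)), Ls.card ≤ (U.card + 1) / 2 ∧ (∀ L ∈ Ls, IsLine L) ∧
      ∀ j ∈ U, f j ∈ ⋃ L ∈ Ls, L := by
  induction U using Finset.strongInduction with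
  | _ U ih =>
    rcases U.eq_empty_or_nonempty with rfl | ⟨j, hj⟩
    · exact ⟨∅, by simp, by simp, by simp⟩
    rcases (U.erase j).eq_empty_or_nonempty with he | ⟨k, hk⟩
    · refine ⟨{lineThrough (f j) (f j)}, ?_, ?_, ?_⟩
      · have : 1 ≤ U.card := Finset.card_pos.mpr ⟨j, hj⟩
        simp; omega
      · intro L hL
        rw [Finset.mem_singleton] at hL
        exact hL ▸ isLine_lineThrough _ _
      · intro x hx
        have hxj : x = j := by
          by_contra hxj
          exact Finset.notMem_empty x (he ▸ Finset.mem_erase.mpr ⟨hxj, hx⟩)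
        subst hxj
        exact Set.mem_biUnion (Finset.mem_singleton_self _) (left_mem_lineThrough _ _)
    · have hkU : k ∈ U := (Finset.mem_erase.mp hk).2
      have hkj : k ≠ j := (Finset.mem_erase.mp hk).1
      obtain ⟨Ls, hcard, hline, hcov⟩ := ih ((U.erase j).erase k)
        (ssubset_of_subset_of_ssubset (Finset.erase_subset _ _) (Finset.erase_ssubset hj))
      refine ⟨insert (lineThrough (f j) (f k)) Ls, ?_, ?_, ?_⟩
      · have h2 : 2 ≤ U.card := Finset.one_lt_card.mpr ⟨j, hj, k, hkU, hkj.symm⟩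
        have hc : ((U.erase j).erase k).card = U.card - 2 := by
          rw [Finset.card_erase_of_mem hk, Finset.card_erase_of_mem hj]
          omega
        have := Finset.card_insert_le (lineThrough (f j) (f k)) Ls
        omega
      · intro L hL
        rcases Finset.mem_insert.mp hL with rfl | h
        · exact isLine_lineThrough _ _
        · exact hline _ h
      · intro x hx
        by_cases hxj : x = j
        · exact Set.mem_biUnion (Finset.mem_insert_self _ _)
            (by rw [hxj]; exact left_mem_lineThrough _ _)
        by_cases hxk : x = k
        · exact Set.mem_biUnion (Finset.mem_insert_self _ _)
            (by rw [hxk]; exact right_mem_lineThrough _ _)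
        obtain ⟨L, hL, hm⟩ := Set.mem_iUnion₂.mp
          (hcov x (Finset.mem_erase.mpr ⟨hxk, Finset.mem_erase.mpr ⟨hxj, hx⟩⟩))
        exact Set.mem_biUnion (Finset.mem_insert_of_mem hL) hm

lemma not_pos_and_neg {n m : ℕ} {clause : Fin m → (Fin n × Bool) × (Fin n × Bool)}
    (hd : ∀ j, (clause j).1.1 ≠ (clause j).2.1) {i : Fin n} {j : Fin m}
    (hp : OccursPos clause i j) (hn : OccursNeg clause i j) : False := by
  rcases hp with hp | hp <;> rcases hn with hn | hn
  · rw [hp] at hn; simp at hn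
  · exact hd j (by simp [hp, hn])
  · exact hd j (by simp [hp, hn])
  · rw [hp] at hn; simp at hn

lemma mem_of_pos {n m : ℕ} {clause : Fin m → (Fin n × Bool) × (Fin n × Bool)}
    {i : Fin n} {j : Fin m} (hp : OccursPos clause i j) :
    (clause j).1.1 = i ∨ (clause j).2.1 = i := by
  rcases hp with hp | hp
  · exact Or.inl (by rw [hp])
  · exact Or.inr (by rw [hp])

lemma mem_of_neg {n m : ℕ} {clause : Fin m → (Fin n × Bool) × (Fin n × Bool)}
    {i : Fin n} {j : Fin m} (hp : OccursNeg clause i j) :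
    (clause j).1.1 = i ∨ (clause j).2.1 = i := by
  rcases hp with hp | hp
  · exact Or.inl (by rw [hp])
  · exact Or.inr (by rw [hp])

def varLine1 {n : ℕ} (vpt : Fin n → Fin 4 → ℝ × ℝ) (g : Fin n → Bool) (i : Fin n) :
    Set (ℝ × ℝ) :=
  if g i then lineThrough (vpt i 0) (vpt i 1) else lineThrough (vpt i 0) (vpt i 2)

def varLine2 {n : ℕ} (vpt : Fin n → Fin 4 → ℝ × ℝ) (g : Fin n → Bool) (i : Fin n) :
    Set (ℝ × ℝ) :=
  if g i then lineThrough (vpt i 2) (vpt i 3) else lineThrough (vpt i 1) (vpt i 3)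

lemma isLine_varLine1 {n : ℕ} (vpt : Fin n → Fin 4 → ℝ × ℝ) (g : Fin n → Bool)
    (i : Fin n) : IsLine (varLine1 vpt g i) := by
  unfold varLine1; split <;> exact isLine_lineThrough _ _

lemma isLine_varLine2 {n : ℕ} (vpt : Fin n → Fin 4 → ℝ × ℝ) (g : Fin n → Bool)
    (i : Fin n) : IsLine (varLine2 vpt g i) := by
  unfold varLine2; split <;> exact isLine_lineThrough _ _

lemma cover_sat {n m : ℕ} (clause : Fin m → (Fin n × Bool) × (Fin n × Bool))
    (hd : ∀ j, (clause j).1.1 ≠ (clause j).2.1)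
    (hocc3 : ∀ i : Fin n, {j : Fin m | (clause j).1.1 = i ∨ (clause j).2.1 = i}.ncard = 3)
    (vpt : Fin n → Fin 4 → ℝ × ℝ) (cpt : Fin m → ℝ × ℝ)
    (tri : Fin n → Fin m × Fin m × Fin m) (pos2 : Fin n → Bool)
    (hvne : ∀ i : Fin n, ∀ a b : Fin 4, a ≠ b → vpt i a ≠ vpt i b)
    (hconf2 : ∀ i : Fin n, (tri i).1 ≠ (tri i).2.1 ∧
      (if pos2 i then
          OccursPos clause i (tri i).1 ∧ OccursPos clause i (tri i).2.1 ∧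
            OccursNeg clause i (tri i).2.2
        else
          OccursNeg clause i (tri i).1 ∧ OccursNeg clause i (tri i).2.1 ∧
            OccursPos clause i (tri i).2.2) ∧
      ∀ S ∈ DesignatedTriples vpt cpt tri pos2 i, Collinear ℝ S)
    (g : Fin n → Bool) (i : Fin n) (j : Fin m)
    (hocc : if g i then OccursPos clause i j else OccursNeg clause i j) :
    cpt j ∈ varLine1 vpt g i ∨ cpt j ∈ varLine2 vpt g i := by
  unfold varLine1 varLine2
  obtain ⟨hab, hoccs, hcol⟩ := hconf2 i
  -- distinctness of the three clauses of variable i, and that they exhaust its occurrences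
  have hca : (tri i).2.2 ≠ (tri i).1 := by
    intro h
    split at hoccs
    · exact not_pos_and_neg hd hoccs.1 (h ▸ hoccs.2.2)
    · exact not_pos_and_neg hd (h ▸ hoccs.2.2) hoccs.1
  have hcb : (tri i).2.2 ≠ (tri i).2.1 := by
    intro h
    split at hoccs
    · exact not_pos_and_neg hd hoccs.2.1 (h ▸ hoccs.2.2)
    · exact not_pos_and_neg hd (h ▸ hoccs.2.2) hoccs.2.1
  have hmema : (clause (tri i).1).1.1 = i ∨ (clause (tri i).1).2.1 = i := by
    split at hoccs
    · exact mem_of_pos hoccs.1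
    · exact mem_of_neg hoccs.1
  have hmemb : (clause (tri i).2.1).1.1 = i ∨ (clause (tri i).2.1).2.1 = i := by
    split at hoccs
    · exact mem_of_pos hoccs.2.1
    · exact mem_of_neg hoccs.2.1
  have hmemc : (clause (tri i).2.2).1.1 = i ∨ (clause (tri i).2.2).2.1 = i := by
    split at hoccs
    · exact mem_of_neg hoccs.2.2
    · exact mem_of_pos hoccs.2.2
  have habc : ({(tri i).1, (tri i).2.1, (tri i).2.2} : Set (Fin m)) =
      {j : Fin m | (clause j).1.1 = i ∨ (clause j).2.1 = i} := by
    apply Set.eq_of_subset_of_ncard_le (ht := Set.toFinite _)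
    · rintro x (rfl | rfl | rfl) <;> assumption
    · rw [hocc3 i]
      have : ({(tri i).1, (tri i).2.1, (tri i).2.2} : Set (Fin m)).ncard = 3 :=
        Set.ncard_eq_three.mpr ⟨_, _, _, hab, Ne.symm hca, Ne.symm hcb, rfl⟩
      omega
  have hj3 : j = (tri i).1 ∨ j = (tri i).2.1 ∨ j = (tri i).2.2 := by
    have hjmem : j ∈ {j : Fin m | (clause j).1.1 = i ∨ (clause j).2.1 = i} := by
      split at hocc
      · exact mem_of_pos hocc
      · exact mem_of_neg hocc
    rw [← habc] at hjmem
    simpa using hjmem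
  cases hg : g i <;>
      simp only [hg, Bool.false_eq_true, if_true, if_false] at hocc ⊢ <;>
    cases hp2 : pos2 i <;>
      simp only [hp2, Bool.false_eq_true, if_true, if_false] at hoccs
  -- g i = false, pos2 i = false
  · rcases hj3 with rfl | rfl | rfl
    · exact Or.inl (mem_lineThrough_of_collinear (hvne i 2 0 (by decide))
        (hcol _ (by simp [DesignatedTriples, hp2])))
    · exact Or.inr (mem_lineThrough_of_collinear (hvne i 3 1 (by decide))
        (hcol _ (by simp [DesignatedTriples, hp2])))
    · exact absurd hocc (fun hn => not_pos_and_neg hd hoccs.2.2 hn)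
  -- g i = false, pos2 i = true
  · rcases hj3 with rfl | rfl | rfl
    · exact absurd hocc (fun hn => not_pos_and_neg hd hoccs.1 hn)
    · exact absurd hocc (fun hn => not_pos_and_neg hd hoccs.2.1 hn)
    · exact Or.inl (mem_lineThrough_of_collinear (hvne i 2 0 (by decide))
        (hcol _ (by simp [DesignatedTriples, hp2])))
  -- g i = true, pos2 i = false
  · rcases hj3 with rfl | rfl | rfl
    · exact absurd hocc (fun hp => not_pos_and_neg hd hp hoccs.1)
    · exact absurd hocc (fun hp => not_pos_and_neg hd hp hoccs.2.1)
    · exact Or.inl (mem_lineThrough_of_collinear (hvne i 1 0 (by decide))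
        (hcol _ (by simp [DesignatedTriples, hp2])))
  -- g i = true, pos2 i = true
  · rcases hj3 with rfl | rfl | rfl
    · exact Or.inl (mem_lineThrough_of_collinear (hvne i 1 0 (by decide))
        (hcol _ (by simp [DesignatedTriples, hp2])))
    · exact Or.inr (mem_lineThrough_of_collinear (hvne i 3 2 (by decide))
        (hcol _ (by simp [DesignatedTriples, hp2])))
    · exact absurd hocc (fun hp => not_pos_and_neg hd hp hoccs.2.2)

/-- If there is an assignment satisfying at least `w` clauses, then there is a family of
at most `2n + ⌈(m − w)/2⌉` lines covering all points of the configuration. -/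
theorem stmt_7 {n m : ℕ} (clause : Fin m → (Fin n × Bool) × (Fin n × Bool))
    (hsat : IsE3OccE2SAT clause)
    (vpt : Fin n → Fin 4 → ℝ × ℝ) (cpt : Fin m → ℝ × ℝ)
    (tri : Fin n → Fin m × Fin m × Fin m) (pos2 : Fin n → Bool)
    (hconf : IsPointConfig clause vpt cpt tri pos2) (w : ℤ)
    (h : ∃ g : Fin n → Bool, w ≤ ({j : Fin m | Satisfies clause g j}.ncard : ℤ)) :
    ∃ Ls : Finset (Set (ℝ × ℝ)),
      (Ls.card : ℤ) ≤ 2 * (n : ℤ) + ((m : ℤ) - w + 1) / 2 ∧ (∀ L ∈ Ls, IsLine L) ∧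
      ∀ p ∈ ConfigPoints vpt cpt, ∃ L ∈ Ls, p ∈ L := by
  classical
  obtain ⟨g, hw⟩ := h
  obtain ⟨hd, hocc3, -⟩ := hsat
  obtain ⟨hinj, hconf2, -⟩ := hconf
  have hvne : ∀ i : Fin n, ∀ a b : Fin 4, a ≠ b → vpt i a ≠ vpt i b := by
    intro i a b hab he
    have h2 := hinj (a₁ := Sum.inl (i, a)) (a₂ := Sum.inl (i, b)) he
    simp only [Sum.inl.injEq, Prod.mk.injEq] at h2
    exact hab h2.2
  obtain ⟨CL, hCLcard, hCLline, hCLcov⟩ :=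
    cover_pairs cpt (Finset.univ.filter (fun j => ¬ Satisfies clause g j))
  set VL : Finset (Set (ℝ × ℝ)) :=
    (Finset.univ.image (varLine1 vpt g)) ∪ (Finset.univ.image (varLine2 vpt g)) with hVL
  have hm1 : ∀ i : Fin n, varLine1 vpt g i ∈ VL ∪ CL :=
    fun i => Finset.mem_union.mpr (Or.inl (Finset.mem_union.mpr (Or.inl
      (Finset.mem_image_of_mem _ (Finset.mem_univ i)))))
  have hm2 : ∀ i : Fin n, varLine2 vpt g i ∈ VL ∪ CL :=
    fun i => Finset.mem_union.mpr (Or.inl (Finset.mem_union.mpr (Or.inr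
      (Finset.mem_image_of_mem _ (Finset.mem_univ i)))))
  refine ⟨VL ∪ CL, ?_, ?_, ?_⟩
  · -- cardinality bound
    have h1 : VL.card ≤ 2 * n := by
      have ha := Finset.card_image_le (s := (Finset.univ : Finset (Fin n)))
        (f := varLine1 vpt g)
      have hb := Finset.card_image_le (s := (Finset.univ : Finset (Fin n)))
        (f := varLine2 vpt g)
      have hc := Finset.card_union_le (Finset.univ.image (varLine1 vpt g))
        (Finset.univ.image (varLine2 vpt g))
      simp only [Finset.card_univ, Fintype.card_fin] at ha hb
      rw [hVL]
      omega
    have hUm : ((Finset.univ.filter (fun j => ¬ Satisfies clause g j)).card : ℤ)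
        ≤ (m : ℤ) - w := by
      have hsplit := Finset.card_filter_add_card_filter_not
        (s := (Finset.univ : Finset (Fin m))) (p := fun j => Satisfies clause g j)
      have hncard : ({j : Fin m | Satisfies clause g j}).ncard
          = (Finset.univ.filter (fun j => Satisfies clause g j)).card := by
        rw [show {j : Fin m | Satisfies clause g j}
            = ↑(Finset.univ.filter (fun j => Satisfies clause g j)) by ext j; simp,
          Set.ncard_coe_finset]
      rw [hncard] at hw
      simp only [Finset.card_univ, Fintype.card_fin] at hsplit
      omega
    have h2 := Finset.card_union_le VL CL
    omega
  · -- all are lines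
    intro L hL
    rcases Finset.mem_union.mp hL with hL | hL
    · rcases Finset.mem_union.mp hL with hL | hL
      · obtain ⟨i, -, rfl⟩ := Finset.mem_image.mp hL
        exact isLine_varLine1 _ _ _
      · obtain ⟨i, -, rfl⟩ := Finset.mem_image.mp hL
        exact isLine_varLine2 _ _ _
    · exact hCLline _ hL
  · -- coverage
    intro p hp
    rcases hp with ⟨⟨i, a⟩, rfl⟩ | ⟨j, rfl⟩
    · -- variable points
      show ∃ L ∈ VL ∪ CL, vpt i a ∈ L
      fin_cases a
      · exact ⟨varLine1 vpt g i, hm1 i,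
          by unfold varLine1; split <;> exact left_mem_lineThrough _ _⟩
      · by_cases hg : g i
        · exact ⟨varLine1 vpt g i, hm1 i,
            by unfold varLine1; rw [if_pos hg]; exact right_mem_lineThrough _ _⟩
        · exact ⟨varLine2 vpt g i, hm2 i,
            by unfold varLine2; rw [if_neg hg]; exact left_mem_lineThrough _ _⟩
      · by_cases hg : g i
        · exact ⟨varLine2 vpt g i, hm2 i,
            by unfold varLine2; rw [if_pos hg]; exact left_mem_lineThrough _ _⟩
        · exact ⟨varLine1 vpt g i, hm1 i,
            by unfold varLine1; rw [if_neg hg]; exact right_mem_lineThrough _ _⟩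
      · exact ⟨varLine2 vpt g i, hm2 i,
          by unfold varLine2; split <;> exact right_mem_lineThrough _ _⟩
    · -- clause points
      by_cases hs : Satisfies clause g j
      · have hex : ∃ i : Fin n,
            if g i then OccursPos clause i j else OccursNeg clause i j := by
          rcases hs with hs | hs
          · refine ⟨(clause j).1.1, ?_⟩
            cases hgl : g ((clause j).1.1) <;>
              simp only [Bool.false_eq_true, if_true, if_false]
            · exact Or.inl (by rw [← hgl, hs])
            · exact Or.inl (by rw [← hgl, hs])
          · refine ⟨(clause j).2.1, ?_⟩
            cases hgl : g ((clause j).2.1) <;>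
              simp only [Bool.false_eq_true, if_true, if_false]
            · exact Or.inr (by rw [← hgl, hs])
            · exact Or.inr (by rw [← hgl, hs])
        obtain ⟨i, hocc⟩ := hex
        rcases cover_sat clause hd hocc3 vpt cpt tri pos2 hvne hconf2 g i j hocc with
          hc | hc
        · exact ⟨varLine1 vpt g i, hm1 i, hc⟩
        · exact ⟨varLine2 vpt g i, hm2 i, hc⟩
      · have := hCLcov j (by simp [hs])
        obtain ⟨L, hL, hmem⟩ := Set.mem_iUnion₂.mp this
        exact ⟨L, Finset.mem_union.mpr (Or.inr hL), hmem⟩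
end

section
/- Let (V, C) be an E3-Occ-E2-SAT instance with n variables and m clauses, and let P be a point configuration for (V, C) in ℝ² (as defined in the context). If there exists a family of at most 2n + ⌊(m − w)/2⌋ lines in ℝ² that cover all points of P, then there exists a truth assignment of the variables in V that satisfies at least w clauses of C. -/
/-!
Replace each covering line by the set of configuration points on it. Since no three points
other than a designated triple are collinear, each such set has at most two points or is a
designated triple, so the `4n + m` points are covered by a family `F` of pairs and designated
triples with `|F| ≤ |Ls|`.

Give variable `i` the sign of its two like occurrences if the triple of one of them is in `F`,
and the opposite sign otherwise. Every clause whose point lies on a triple of `F` is then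
satisfied, except possibly the odd occurrence of a variable one of whose like occurrences is
used too (the odd occurrence is then "sacrificed"). The triples of the two like occurrences are disjoint, while the odd one
meets each of them in a variable point, so a sacrificed occurrence comes with a doubly covered
variable point. Counting the points that only pairs cover gives `4n + #unsat ≤ 2|F|`, hence at
least `m - (2|F| - 4n) ≥ w` clauses are satisfied.
-/

open Finset

namespace PointConfig

variable {n m : ℕ}

/-- `inl (i, a)` indexes the variable point `v_i^{a+1}`, `inr j` the clause point `c_j^*`. -/
abbrev PointIdx (n m : ℕ) : Type := (Fin n × Fin 4) ⊕ Fin m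

def point (vpt : Fin n → Fin 4 → ℝ × ℝ) (cpt : Fin m → ℝ × ℝ) : PointIdx n m → ℝ × ℝ :=
  Sum.elim (fun x => vpt x.1 x.2) cpt

/-- Occurrence `c : Fin 3` of variable `i` is in clause `(tri i).1`, `(tri i).2.1` or
`(tri i).2.2`; occurrences `0` and `1` have the sign `pos2 i`, occurrence `2` the other one. -/
def occClause (tri : Fin n → Fin m × Fin m × Fin m) (i : Fin n) : Fin 3 → Fin m :=
  ![(tri i).1, (tri i).2.1, (tri i).2.2]

def occSign (b : Bool) (c : Fin 3) : Bool :=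
  if c = 2 then !b else b

def varPoints : Bool → Fin 3 → Finset (Fin 4)
  | true => ![{0, 1}, {2, 3}, {0, 2}]
  | false => ![{0, 2}, {1, 3}, {0, 1}]

def triple (tri : Fin n → Fin m × Fin m × Fin m) (pos2 : Fin n → Bool) (i : Fin n)
    (c : Fin 3) : Finset (PointIdx n m) :=
  insert (.inr (occClause tri i c)) ((varPoints (pos2 i) c).image fun a => .inl (i, a))

section Triple

variable {tri : Fin n → Fin m × Fin m × Fin m} {pos2 : Fin n → Bool}

@[simp]
lemma inl_mem_triple {i i' : Fin n} {a : Fin 4} {c : Fin 3} :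
    .inl (i', a) ∈ triple tri pos2 i c ↔ i' = i ∧ a ∈ varPoints (pos2 i) c := by
  simp [triple, eq_comm, and_comm]

@[simp]
lemma inr_mem_triple {i : Fin n} {j : Fin m} {c : Fin 3} :
    .inr j ∈ triple tri pos2 i c ↔ j = occClause tri i c := by
  simp [triple]

lemma filter_isRight_triple (i : Fin n) (c : Fin 3) :
    (triple tri pos2 i c).filter (·.isRight) = {.inr (occClause tri i c)} := by
  ext (x | j) <;> simp

lemma card_triple (i : Fin n) (c : Fin 3) : (triple tri pos2 i c).card = 3 := by
  rw [triple, card_insert_of_notMem (by simp),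
    card_image_of_injective _ fun a b hab => by simpa using hab]
  cases pos2 i <;> fin_cases c <;> rfl

lemma eq_of_triple_eq {i i' : Fin n} {c c' : Fin 3}
    (h : triple tri pos2 i c = triple tri pos2 i' c') : i = i' ∧ c = c' := by
  obtain ⟨a, ha⟩ : (varPoints (pos2 i) c).Nonempty := by cases pos2 i <;> fin_cases c <;> decide
  obtain ⟨rfl, -⟩ := inl_mem_triple.1 (h ▸ inl_mem_triple.2 ⟨rfl, ha⟩)
  have hvar : varPoints (pos2 i) c = varPoints (pos2 i) c' := by
    ext a
    simpa using congrArg (Sum.inl (i, a) ∈ ·) h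
  refine ⟨rfl, ?_⟩
  revert hvar
  cases pos2 i <;> fin_cases c <;> fin_cases c' <;> decide

end Triple

lemma _root_.IsLine.collinear_s8 {L : Set (ℝ × ℝ)} (hL : IsLine L) : Collinear ℝ L := by
  obtain ⟨a, d, -, rfl⟩ := hL
  refine (collinear_iff_exists_forall_eq_smul_vadd _).2 ⟨a, d, fun p ⟨t, ht⟩ => ⟨t, ?_⟩⟩
  rw [ht, vadd_eq_add, add_comm]

lemma card_le_three_of_forall_card_filter_isRight {α β : Type*}
    {s : Finset (α ⊕ β)} (h : ∀ t ⊆ s, t.card = 3 → (t.filter (·.isRight)).card = 1) :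
    s.card ≤ 3 := by
  by_contra! hs
  by_cases hr : 2 ≤ (s.filter (·.isRight)).card
  · obtain ⟨r, hr, hr2⟩ := exists_subset_card_eq hr
    obtain ⟨t, hrt, hts, ht⟩ := exists_subsuperset_card_eq ((hr.trans (filter_subset _ _)))
      (by omega) (by omega : 3 ≤ s.card)
    have : r ⊆ t.filter (·.isRight) := fun x hx => mem_filter.2 ⟨hrt hx, (mem_filter.1 (hr hx)).2⟩
    have := card_le_card this
    have := h t hts ht
    omega
  · have hl : 3 ≤ (s.filter fun x => ¬x.isRight).card := by
      have := card_filter_add_card_filter_not (s := s) (·.isRight)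
      omega
    obtain ⟨t, hts, ht⟩ := exists_subset_card_eq hl
    have := h t (hts.trans (filter_subset _ _)) ht
    rw [filter_eq_empty_iff.2 fun x hx => (mem_filter.1 (hts hx)).2, card_empty] at this
    omega

section Configuration

variable {vpt : Fin n → Fin 4 → ℝ × ℝ} {cpt : Fin m → ℝ × ℝ}
  {tri : Fin n → Fin m × Fin m × Fin m} {pos2 : Fin n → Bool}
  {clause : Fin m → (Fin n × Bool) × (Fin n × Bool)}

lemma point_mem_configPoints (x : PointIdx n m) : point vpt cpt x ∈ ConfigPoints vpt cpt := by
  rcases x with v | j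
  exacts [Or.inl ⟨v, rfl⟩, Or.inr ⟨j, rfl⟩]

lemma exists_eq_image_triple_of_mem_designatedTriples {i : Fin n} {S : Set (ℝ × ℝ)}
    (hS : S ∈ DesignatedTriples vpt cpt tri pos2 i) :
    ∃ c, S = point vpt cpt '' triple tri pos2 i c := by
  simp only [DesignatedTriples] at hS
  cases hb : pos2 i <;> simp only [hb] at hS <;>
    rcases hS with rfl | rfl | rfl
  all_goals first
    | (refine ⟨0, ?_⟩; simp [triple, occClause, varPoints, hb, point, Set.image_insert_eq]; done)
    | (refine ⟨1, ?_⟩; simp [triple, occClause, varPoints, hb, point, Set.image_insert_eq]; done)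
    | (refine ⟨2, ?_⟩; simp [triple, occClause, varPoints, hb, point, Set.image_insert_eq])

noncomputable def pointsOn (vpt : Fin n → Fin 4 → ℝ × ℝ) (cpt : Fin m → ℝ × ℝ)
    (L : Set (ℝ × ℝ)) : Finset (PointIdx n m) :=
  (Set.toFinite (point vpt cpt ⁻¹' L)).toFinset

lemma _root_.IsPointConfig.eq_triple_of_collinear (hconf : IsPointConfig clause vpt cpt tri pos2)
    {t : Finset (PointIdx n m)} (ht : t.card = 3) (hcol : Collinear ℝ (point vpt cpt '' t)) :
    ∃ i c, t = triple tri pos2 i c := by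
  have hinj : Function.Injective (point vpt cpt) := hconf.1
  obtain ⟨x, y, z, hxy, hxz, hyz, rfl⟩ := card_eq_three.1 ht
  obtain ⟨i, hi⟩ := hconf.2.2 _ _ _ (point_mem_configPoints x) (point_mem_configPoints y)
    (point_mem_configPoints z) (hinj.ne hxy) (hinj.ne hxz) (hinj.ne hyz)
    (by simpa [Set.image_insert_eq] using hcol)
  obtain ⟨c, hc⟩ := exists_eq_image_triple_of_mem_designatedTriples hi
  refine ⟨i, c, coe_inj.1 (Set.image_injective.2 hinj ?_)⟩
  simpa [Set.image_insert_eq] using hc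

lemma _root_.IsPointConfig.card_pointsOn_le_two_or_eq_triple
    (hconf : IsPointConfig clause vpt cpt tri pos2) {L : Set (ℝ × ℝ)} (hL : IsLine L) :
    (pointsOn vpt cpt L).card ≤ 2 ∨ ∃ i c, pointsOn vpt cpt L = triple tri pos2 i c := by
  have htriple : ∀ t ⊆ pointsOn vpt cpt L, t.card = 3 → ∃ i c, t = triple tri pos2 i c :=
    fun t hts ht => hconf.eq_triple_of_collinear ht <| hL.collinear_s8.subset <|
      Set.image_subset_iff.2 fun x hx => by simpa [pointsOn] using hts hx
  have hle : (pointsOn vpt cpt L).card ≤ 3 :=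
    card_le_three_of_forall_card_filter_isRight fun t hts ht => by
      obtain ⟨i, c, rfl⟩ := htriple t hts ht
      simp [filter_isRight_triple]
  obtain hlt | heq := hle.lt_or_eq
  · exact Or.inl (by omega)
  · exact Or.inr (htriple _ subset_rfl heq)

lemma satisfies_of_literal {g : Fin n → Bool} {i : Fin n} {j : Fin m} {b : Bool}
    (h : (clause j).1 = (i, b) ∨ (clause j).2 = (i, b)) (hg : g i = b) :
    Satisfies clause g j := by
  rcases h with h | h <;> simp [Satisfies, h, hg]

lemma _root_.IsPointConfig.satisfies_occClause
    (hconf : IsPointConfig clause vpt cpt tri pos2) {g : Fin n → Bool} {i : Fin n} {c : Fin 3}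
    (hg : g i = occSign (pos2 i) c) : Satisfies clause g (occClause tri i c) := by
  obtain ⟨-, hocc, -⟩ := hconf.2.1 i
  cases hb : pos2 i <;> simp only [hb, occSign] at hocc hg <;>
    obtain ⟨h0, h1, h2⟩ := hocc <;> fin_cases c <;> simp at hg
  all_goals first
    | exact satisfies_of_literal h0 hg | exact satisfies_of_literal h1 hg
    | exact satisfies_of_literal h2 hg

end Configuration

def chosenSign (b : Bool) (S : Finset (Fin 3)) : Bool :=
  if (S ∩ {0, 1}).Nonempty then b else !b

def sacrificed (S : Finset (Fin 3)) : Finset (Fin 3) :=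
  if (S ∩ {0, 1}).Nonempty then S ∩ {2} else ∅

lemma occSign_eq_chosenSign (b : Bool) {S : Finset (Fin 3)} {c : Fin 3} (hc : c ∈ S)
    (hc' : c ∉ sacrificed S) : occSign b c = chosenSign b S := by
  revert S c b
  decide

lemma four_add_card_sacrificed_le (b : Bool) (S : Finset (Fin 3)) :
    4 + (sacrificed S).card ≤ (S.biUnion (varPoints b))ᶜ.card + 2 * S.card := by
  revert S b
  decide

lemma card_filter_univ_prod {α β : Type*} [Fintype α] [Fintype β] [DecidableEq β]
    (S : α → Finset β) :
    (univ.filter fun p : α × β => p.2 ∈ S p.1).card = ∑ a, (S a).card := by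
  rw [card_filter, Fintype.sum_prod_type]
  simp

instance (clause : Fin m → (Fin n × Bool) × (Fin n × Bool)) (g : Fin n → Bool) :
    DecidablePred (Satisfies clause g) :=
  fun _ => inferInstanceAs (Decidable (_ ∨ _))

section Counting

variable (tri : Fin n → Fin m × Fin m × Fin m) (pos2 : Fin n → Bool)
  (F : Finset (Finset (PointIdx n m)))

def usedOcc (i : Fin n) : Finset (Fin 3) :=
  univ.filter fun c => triple tri pos2 i c ∈ F

def assignment (i : Fin n) : Bool :=
  chosenSign (pos2 i) (usedOcc tri pos2 F i)

def usedPairs : Finset (Fin n × Fin 3) :=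
  univ.filter fun p => p.2 ∈ usedOcc tri pos2 F p.1

def sacrificedPairs : Finset (Fin n × Fin 3) :=
  univ.filter fun p => p.2 ∈ sacrificed (usedOcc tri pos2 F p.1)

def coveredClauses : Finset (Fin m) :=
  (usedPairs tri pos2 F).image fun p => occClause tri p.1 p.2

def uncoveredVarPoints : Finset (Fin n × Fin 4) :=
  univ.filter fun p => p.2 ∈ ((usedOcc tri pos2 F p.1).biUnion (varPoints (pos2 p.1)))ᶜ

lemma card_unsat_le (clause : Fin m → (Fin n × Bool) × (Fin n × Bool))
    (hocc : ∀ g i c, g i = occSign (pos2 i) c → Satisfies clause g (occClause tri i c)) :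
    (univ.filter fun j => ¬Satisfies clause (assignment tri pos2 F) j).card ≤
      (coveredClauses tri pos2 F)ᶜ.card + (sacrificedPairs tri pos2 F).card := by
  calc _ ≤ ((coveredClauses tri pos2 F)ᶜ ∪
        (sacrificedPairs tri pos2 F).image fun p => occClause tri p.1 p.2).card := by
        refine card_le_card fun j hj => ?_
        by_contra hj'
        simp only [mem_union, mem_compl, not_or, not_not, coveredClauses, mem_image] at hj'
        obtain ⟨⟨⟨i, c⟩, hic, rfl⟩, hsac⟩ := hj'
        refine (mem_filter.1 hj).2 (hocc _ i c ?_)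
        refine (occSign_eq_chosenSign _ (mem_filter.1 hic).2 fun hc => hsac ?_).symm
        exact ⟨(i, c), mem_filter.2 ⟨mem_univ _, hc⟩, rfl⟩
    _ ≤ _ := (card_union_le _ _).trans (Nat.add_le_add_left card_image_le _)

variable {tri pos2 F}

lemma card_uncovered_add_le (hcover : ∀ x, ∃ S ∈ F, x ∈ S)
    (hF : ∀ S ∈ F, S.card ≤ 2 ∨ ∃ i c, S = triple tri pos2 i c) :
    (uncoveredVarPoints tri pos2 F).card + (coveredClauses tri pos2 F)ᶜ.card ≤
      2 * (F.filter fun S => S.card ≤ 2).card := by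
  rw [← card_disjSum, mul_comm]
  refine (card_le_card fun x hx => ?_).trans
    (card_biUnion_le_card_mul _ id 2 fun S hS => (mem_filter.1 hS).2)
  obtain ⟨S, hSF, hxS⟩ := hcover x
  refine mem_biUnion.2 ⟨S, mem_filter.2 ⟨hSF, ?_⟩, hxS⟩
  obtain hS | ⟨i, c, rfl⟩ := hF S hSF
  · exact hS
  have hc : c ∈ usedOcc tri pos2 F i := mem_filter.2 ⟨mem_univ _, hSF⟩
  exfalso
  rcases x with ⟨i', a⟩ | j
  · obtain ⟨rfl, ha⟩ := inl_mem_triple.1 hxS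
    exact mem_compl.1 (mem_filter.1 (inl_mem_disjSum.1 hx)).2 (mem_biUnion.2 ⟨c, hc, ha⟩)
  · refine mem_compl.1 (inr_mem_disjSum.1 hx) (mem_image.2 ⟨(i, c), ?_, ?_⟩)
    · exact mem_filter.2 ⟨mem_univ _, hc⟩
    · exact (inr_mem_triple.1 hxS).symm

lemma card_usedPairs_le :
    (usedPairs tri pos2 F).card ≤ (F.filter fun S => ¬S.card ≤ 2).card := by
  refine card_le_card_of_injOn (fun p => triple tri pos2 p.1 p.2) (fun p hp => ?_)
    fun p _ q _ h => Prod.ext_iff.2 (eq_of_triple_eq h)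
  simp only [usedPairs, usedOcc, mem_coe, mem_filter, mem_univ, true_and] at hp
  simp [hp, card_triple]

lemma four_mul_add_card_sacrificedPairs_le :
    4 * n + (sacrificedPairs tri pos2 F).card ≤
      (uncoveredVarPoints tri pos2 F).card + 2 * (usedPairs tri pos2 F).card := by
  calc 4 * n + (sacrificedPairs tri pos2 F).card
      = ∑ i, (4 + (sacrificed (usedOcc tri pos2 F i)).card) := by
        rw [sacrificedPairs, card_filter_univ_prod fun i => sacrificed (usedOcc tri pos2 F i),
          sum_add_distrib]
        simp [mul_comm]
    _ ≤ ∑ i, (((usedOcc tri pos2 F i).biUnion (varPoints (pos2 i)))ᶜ.card +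
          2 * (usedOcc tri pos2 F i).card) :=
        sum_le_sum fun i _ => four_add_card_sacrificed_le (pos2 i) (usedOcc tri pos2 F i)
    _ = _ := by
        rw [uncoveredVarPoints, usedPairs, card_filter_univ_prod, sum_add_distrib, mul_sum,
          card_filter_univ_prod fun i => ((usedOcc tri pos2 F i).biUnion (varPoints (pos2 i)))ᶜ]

variable (tri pos2 F) in
lemma card_unsat_add_le (clause : Fin m → (Fin n × Bool) × (Fin n × Bool))
    (hocc : ∀ g i c, g i = occSign (pos2 i) c → Satisfies clause g (occClause tri i c))
    (hcover : ∀ x, ∃ S ∈ F, x ∈ S) (hF : ∀ S ∈ F, S.card ≤ 2 ∨ ∃ i c, S = triple tri pos2 i c) :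
    (univ.filter fun j => ¬Satisfies clause (assignment tri pos2 F) j).card + 4 * n ≤
      2 * F.card := by
  have hunsat := card_unsat_le tri pos2 F clause hocc
  have huncovered := card_uncovered_add_le hcover hF
  have hused := card_usedPairs_le (tri := tri) (pos2 := pos2) (F := F)
  have hvars := four_mul_add_card_sacrificedPairs_le (tri := tri) (pos2 := pos2) (F := F)
  have hsplit := card_filter_add_card_filter_not (s := F) fun S => S.card ≤ 2
  omega

end Counting

end PointConfig

open PointConfig

theorem stmt_8_general {n m : ℕ} (clause : Fin m → (Fin n × Bool) × (Fin n × Bool))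
    (vpt : Fin n → Fin 4 → ℝ × ℝ) (cpt : Fin m → ℝ × ℝ)
    (tri : Fin n → Fin m × Fin m × Fin m) (pos2 : Fin n → Bool)
    (hconf : IsPointConfig clause vpt cpt tri pos2) (w : ℤ)
    (h : ∃ Ls : Finset (Set (ℝ × ℝ)),
      (Ls.card : ℤ) ≤ 2 * (n : ℤ) + ((m : ℤ) - w) / 2 ∧ (∀ L ∈ Ls, IsLine L) ∧
      ∀ p ∈ ConfigPoints vpt cpt, ∃ L ∈ Ls, p ∈ L) :
    ∃ g : Fin n → Bool, w ≤ ({j : Fin m | Satisfies clause g j}.ncard : ℤ) := by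
  obtain ⟨Ls, hcard, hline, hcover⟩ := h
  set F := Ls.image (pointsOn vpt cpt)
  have hF : ∀ S ∈ F, S.card ≤ 2 ∨ ∃ i c, S = triple tri pos2 i c := by
    simp only [F, mem_image, forall_exists_index, and_imp]
    rintro _ L hL rfl
    exact hconf.card_pointsOn_le_two_or_eq_triple (hline L hL)
  have hFcover : ∀ x, ∃ S ∈ F, x ∈ S := fun x => by
    obtain ⟨L, hL, hx⟩ := hcover _ (point_mem_configPoints x)
    exact ⟨_, mem_image_of_mem _ hL, by simpa [pointsOn] using hx⟩
  have hunsat := card_unsat_add_le tri pos2 F clause (fun _ _ _ => hconf.satisfies_occClause)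
    hFcover hF
  set g := assignment tri pos2 F
  have hsplit := card_filter_add_card_filter_not (s := univ) (Satisfies clause g)
  have hFcard : F.card ≤ Ls.card := card_image_le
  refine ⟨g, ?_⟩
  rw [Set.ncard_eq_toFinset_card', Set.toFinset_ofPred]
  simp only [card_univ, Fintype.card_fin] at hsplit
  omega

/-- If there is a family of at most `2n + ⌊(m − w)/2⌋` lines covering all points of the
configuration, then there is an assignment satisfying at least `w` clauses. -/
theorem stmt_8 {n m : ℕ} (clause : Fin m → (Fin n × Bool) × (Fin n × Bool))
    (hsat : IsE3OccE2SAT clause)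
    (vpt : Fin n → Fin 4 → ℝ × ℝ) (cpt : Fin m → ℝ × ℝ)
    (tri : Fin n → Fin m × Fin m × Fin m) (pos2 : Fin n → Bool)
    (hconf : IsPointConfig clause vpt cpt tri pos2) (w : ℤ)
    (h : ∃ Ls : Finset (Set (ℝ × ℝ)),
      (Ls.card : ℤ) ≤ 2 * (n : ℤ) + ((m : ℤ) - w) / 2 ∧ (∀ L ∈ Ls, IsLine L) ∧
      ∀ p ∈ ConfigPoints vpt cpt, ∃ L ∈ Ls, p ∈ L) :
    ∃ g : Fin n → Bool, w ≤ ({j : Fin m | Satisfies clause g j}.ncard : ℤ) :=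
  stmt_8_general clause vpt cpt tri pos2 hconf w h
end

section
/- Let n, m, k*, k', w*, w', ε be real numbers with ε > 0, w* > 0, w* ≥ 1/ε, k* ≤ 4·w*, w* ≤ 2·(2n − k*) + m + 1, w' ≥ m − 1 − 2·(k' − 2n), and k' ≤ (1 + ε)·k* (with k* > 0). Then w' ≥ (1 − 10ε)·w*. -/
/-- If `ε > 0`, `w* > 0`, `w* ≥ 1/ε`, `k* > 0`, `k* ≤ 4w*`, `w* ≤ 2(2n − k*) + m + 1`,
`w' ≥ m − 1 − 2(k' − 2n)` and `k' ≤ (1 + ε)k*`, then `w' ≥ (1 − 10ε)·w*`. -/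
theorem stmt_11 (n m kStar k' wStar w' ε : ℝ) (hε : 0 < ε) (hw : 0 < wStar)
    (hwε : 1 / ε ≤ wStar) (hkStar : 0 < kStar) (hk : kStar ≤ 4 * wStar)
    (hw2 : wStar ≤ 2 * (2 * n - kStar) + m + 1)
    (hw' : m - 1 - 2 * (k' - 2 * n) ≤ w')
    (hk' : k' ≤ (1 + ε) * kStar) :
    (1 - 10 * ε) * wStar ≤ w' := by
  have h1 : 1 ≤ wStar * ε := (div_le_iff₀ hε).mp hwε
  nlinarith [mul_le_mul_of_nonneg_left hk hε.le]
end

section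
/- Let N ≥ 10 be an integer, and let a, b, c be three points of the integer lattice ℤ² whose coordinates all lie in the interval [0, N]. If a, b, c are not collinear (as points of ℝ²), then the turning angle of the path (a, b, c) at b, namely π − ∠ a b c, is at least 1/(3N²), where ∠ a b c ∈ [0, π] denotes the (undirected) Euclidean angle at the vertex b of the triangle a b c. -/
/-!
Twice the area of a non-degenerate lattice triangle is a nonzero integer, namely
`|det (a - b, c - b)| = ‖a - b‖ ‖c - b‖ sin θ` with `θ = ∠ a b c`. In the `N × N` box both sides
have length at most `√2 N`, so `sin θ ≥ 1 / (2N²)`, and `π - θ ≥ sin (π - θ) = sin θ`.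
-/

/-- The embedding of the integer lattice `ℤ²` into the Euclidean plane. -/
noncomputable def latticePoint (p : ℤ × ℤ) : EuclideanSpace ℝ (Fin 2) :=
  WithLp.toLp 2 ![(p.1 : ℝ), (p.2 : ℝ)]

open EuclideanGeometry Real

lemma latticePoint_sub (p q : ℤ × ℤ) :
    latticePoint (p - q) = latticePoint p - latticePoint q := by
  ext i; fin_cases i <;> simp [latticePoint]

lemma norm_latticePoint_sq (p : ℤ × ℤ) : ‖latticePoint p‖ ^ 2 = (p.1 : ℝ) ^ 2 + (p.2 : ℝ) ^ 2 := by
  simp [EuclideanSpace.norm_sq_eq, latticePoint, Fin.sum_univ_two]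

lemma norm_latticePoint_le {p : ℤ × ℤ} {n : ℤ} (h₁ : |p.1| ≤ n) (h₂ : |p.2| ≤ n) :
    ‖latticePoint p‖ ≤ √2 * n := by
  have hn : (0 : ℝ) ≤ n := by exact_mod_cast (abs_nonneg _).trans h₁
  have hsq : p.1 ^ 2 + p.2 ^ 2 ≤ 2 * n ^ 2 := by
    have hp₁ := sq_le_sq.mpr (h₁.trans (le_abs_self n))
    have hp₂ := sq_le_sq.mpr (h₂.trans (le_abs_self n))
    linarith
  rw [← sq_le_sq₀ (norm_nonneg _) (by positivity), mul_pow, sq_sqrt zero_le_two,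
    norm_latticePoint_sq]
  exact_mod_cast hsq

lemma sin_angle_mul_norm_mul_norm_eq_abs_det (x y : EuclideanSpace ℝ (Fin 2)) :
    sin (InnerProductGeometry.angle x y) * (‖x‖ * ‖y‖) = |x 0 * y 1 - x 1 * y 0| := by
  have inner_eq (x y : EuclideanSpace ℝ (Fin 2)) : inner ℝ x y = x 0 * y 0 + x 1 * y 1 := by
    simp [PiLp.inner_apply, Fin.sum_univ_two, mul_comm]
  rw [InnerProductGeometry.sin_angle_mul_norm_mul_norm, ← sqrt_sq_eq_abs, inner_eq, inner_eq,
    inner_eq]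
  ring_nf

lemma sin_angle_mul_norm_mul_norm_latticePoint (p q : ℤ × ℤ) :
    sin (InnerProductGeometry.angle (latticePoint p) (latticePoint q)) *
        (‖latticePoint p‖ * ‖latticePoint q‖) =
      |((p.1 * q.2 - p.2 * q.1 : ℤ) : ℝ)| := by
  rw [sin_angle_mul_norm_mul_norm_eq_abs_det]
  simp [latticePoint]

lemma one_le_two_mul_sq_mul_sin_angle_latticePoint {p q : ℤ × ℤ} {n : ℤ}
    (hp : |p.1| ≤ n ∧ |p.2| ≤ n) (hq : |q.1| ≤ n ∧ |q.2| ≤ n)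
    (hp₀ : latticePoint p ≠ 0) (hq₀ : latticePoint q ≠ 0)
    (hsin : 0 < sin (InnerProductGeometry.angle (latticePoint p) (latticePoint q))) :
    1 ≤ 2 * (n : ℝ) ^ 2 * sin (InnerProductGeometry.angle (latticePoint p) (latticePoint q)) := by
  set s := sin (InnerProductGeometry.angle (latticePoint p) (latticePoint q))
  have hdet : p.1 * q.2 - p.2 * q.1 ≠ 0 := by
    have hpos : s * (‖latticePoint p‖ * ‖latticePoint q‖) ≠ 0 :=
      mul_ne_zero hsin.ne' (mul_ne_zero (norm_ne_zero_iff.mpr hp₀) (norm_ne_zero_iff.mpr hq₀))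
    rw [sin_angle_mul_norm_mul_norm_latticePoint] at hpos
    exact_mod_cast abs_ne_zero.mp hpos
  have hn : (0 : ℝ) ≤ n := by exact_mod_cast (abs_nonneg _).trans hp.1
  have hnorms : ‖latticePoint p‖ * ‖latticePoint q‖ ≤ 2 * n ^ 2 := calc
    _ ≤ (√2 * n) * (√2 * n) := by
      gcongr
      exacts [norm_latticePoint_le hp.1 hp.2, norm_latticePoint_le hq.1 hq.2]
    _ = 2 * n ^ 2 := by rw [mul_mul_mul_comm, mul_self_sqrt zero_le_two, sq]
  calc (1 : ℝ) ≤ |((p.1 * q.2 - p.2 * q.1 : ℤ) : ℝ)| := by exact_mod_cast Int.one_le_abs hdet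
    _ = s * (‖latticePoint p‖ * ‖latticePoint q‖) :=
      (sin_angle_mul_norm_mul_norm_latticePoint p q).symm
    _ ≤ s * (2 * n ^ 2) := by gcongr
    _ = 2 * n ^ 2 * s := mul_comm _ _

lemma abs_sub_le_of_mem_box {a b : ℤ × ℤ} {n : ℤ}
    (ha : 0 ≤ a.1 ∧ a.1 ≤ n ∧ 0 ≤ a.2 ∧ a.2 ≤ n) (hb : 0 ≤ b.1 ∧ b.1 ≤ n ∧ 0 ≤ b.2 ∧ b.2 ≤ n) :
    |(a - b).1| ≤ n ∧ |(a - b).2| ≤ n :=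
  ⟨abs_sub_le_of_nonneg_of_le ha.1 ha.2.1 hb.1 hb.2.1,
    abs_sub_le_of_nonneg_of_le ha.2.2.1 ha.2.2.2 hb.2.2.1 hb.2.2.2⟩

theorem stmt_17_general (N : ℕ) (a b c : ℤ × ℤ)
    (ha : 0 ≤ a.1 ∧ a.1 ≤ (N : ℤ) ∧ 0 ≤ a.2 ∧ a.2 ≤ (N : ℤ))
    (hb : 0 ≤ b.1 ∧ b.1 ≤ (N : ℤ) ∧ 0 ≤ b.2 ∧ b.2 ≤ (N : ℤ))
    (hc : 0 ≤ c.1 ∧ c.1 ≤ (N : ℤ) ∧ 0 ≤ c.2 ∧ c.2 ≤ (N : ℤ))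
    (hcol : ¬ Collinear ℝ ({latticePoint a, latticePoint b, latticePoint c} :
      Set (EuclideanSpace ℝ (Fin 2)))) :
    1 / (3 * (N : ℝ) ^ 2) ≤
      Real.pi - EuclideanGeometry.angle (latticePoint a) (latticePoint b) (latticePoint c) := by
  set θ := ∠ (latticePoint a) (latticePoint b) (latticePoint c)
  have hθ : θ = InnerProductGeometry.angle (latticePoint (a - b)) (latticePoint (c - b)) := by
    simp only [θ, EuclideanGeometry.angle, latticePoint_sub, vsub_eq_sub]
  have hsin : 0 < sin θ := sin_pos_of_not_collinear hcol
  have key : 1 ≤ 2 * (N : ℝ) ^ 2 * sin θ := by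
    rw [hθ] at hsin ⊢
    exact_mod_cast one_le_two_mul_sq_mul_sin_angle_latticePoint
      (abs_sub_le_of_mem_box ha hb) (abs_sub_le_of_mem_box hc hb)
      (by rw [latticePoint_sub]; exact sub_ne_zero.mpr (ne₁₂_of_not_collinear hcol))
      (by rw [latticePoint_sub]; exact sub_ne_zero.mpr (ne₂₃_of_not_collinear hcol).symm) hsin
  have hN : (N : ℝ) ≠ 0 := by
    rintro h
    norm_num [h] at key
  calc 1 / (3 * (N : ℝ) ^ 2) ≤ sin θ := by
        rw [div_le_iff₀ (by positivity)]
        linarith [mul_pos (by positivity : (0 : ℝ) < N ^ 2) hsin]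
    _ = sin (π - θ) := (sin_pi_sub θ).symm
    _ ≤ π - θ := sin_le (sub_nonneg.mpr (angle_le_pi _ _ _))

/-- Let `N ≥ 10` and let `a, b, c` be points of the integer lattice with coordinates in
`[0, N]`. If `a, b, c` are not collinear, then the turning angle `π − ∠ a b c` of the
path `(a, b, c)` at `b` is at least `1/(3N²)`. -/
theorem stmt_17 (N : ℕ) (hN : 10 ≤ N) (a b c : ℤ × ℤ)
    (ha : 0 ≤ a.1 ∧ a.1 ≤ (N : ℤ) ∧ 0 ≤ a.2 ∧ a.2 ≤ (N : ℤ))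
    (hb : 0 ≤ b.1 ∧ b.1 ≤ (N : ℤ) ∧ 0 ≤ b.2 ∧ b.2 ≤ (N : ℤ))
    (hc : 0 ≤ c.1 ∧ c.1 ≤ (N : ℤ) ∧ 0 ≤ c.2 ∧ c.2 ≤ (N : ℤ))
    (hcol : ¬ Collinear ℝ ({latticePoint a, latticePoint b, latticePoint c} :
      Set (EuclideanSpace ℝ (Fin 2)))) :
    1 / (3 * (N : ℝ) ^ 2) ≤
      Real.pi - EuclideanGeometry.angle (latticePoint a) (latticePoint b) (latticePoint c) :=
  stmt_17_general N a b c ha hb hc hcol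
end
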